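/- Let g_0,…,g_m be nonzero homogeneous polynomials of common degree d ≥ 1 in k[x_0,…,x_n] satisfying the canonical restrictions, and let ĝ_0,…,ĝ_m be the Newton complementary dual set. If F ∈ k[y_0,…,y_m] is a homogeneous polynomial with F(g_0,…,g_m) = 0, then F(ĝ_0,…,ĝ_m) = 0. Consequently the k-algebras k[g_0,…,g_m] and k[ĝ_0,…,ĝ_m] are isomorphic. -/

import Mathlib

open MvPolynomial Finset

/-- Newton complementary dual of `g` relative to a given directrix vector `β`. -/
noncomputable def newtonDualWith {k : Type*} [CommSemiring k] {N : ℕ}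
    (β : Fin N → ℕ) (g : MvPolynomial (Fin N) k) : MvPolynomial (Fin N) k :=
  ∑ a ∈ g.support,
    monomial (Finsupp.equivFunOnFinite.symm fun i => β i - a i) (coeff a g)

/-- Newton complementary dual of a single form: directrix vector `β i = degreeOf i g`. -/
noncomputable def newtonDual {k : Type*} [CommSemiring k] {N : ℕ}
    (g : MvPolynomial (Fin N) k) : MvPolynomial (Fin N) k :=
  newtonDualWith (fun i => g.degreeOf i) g

/-- The `i`-th coordinate of the Magnus reciprocal involution: `∏_{j ≠ i} x_j`. -/
noncomputable def magnus (k : Type*) [CommSemiring k] (N : ℕ) (i : Fin N) :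
    MvPolynomial (Fin N) k :=
  ∏ j ∈ Finset.univ.erase i, X j

/-! The substitution `x_i ↦ x̂_i = ∏_{l ≠ i} x_l` sends `x^a` to `x^{|a|·𝟙 - a}`. On a form of
degree `d` whose exponents are bounded by `β` it therefore yields `x^{d·𝟙 - β}` times the Newton
dual, and on the dual it yields `x^{(|β| - d)·𝟙 - β}` times the form itself; these exponents are
nonnegative because, by the gcd condition, no `x_i` divides every `g_j`. A relation `F(g) = 0`
splits into relations for the homogeneous components of `F`, and substituting `x̂` into such a
component turns it into a relation for `ĝ` multiplied by a power of a monomial, which cancels in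
the domain `k[x]`. Hence `F ↦ F(g)` and `F ↦ F(ĝ)` have the same kernel. -/

namespace MvPolynomial

variable {k σ ι : Type*}

section CommSemiring
variable [CommSemiring k]

theorem homogeneousComponent_aeval_of_isHomogeneous {δ : ℕ} (hδ : δ ≠ 0)
    {h : ι → MvPolynomial σ k} (hh : ∀ j, (h j).IsHomogeneous δ) (F : MvPolynomial ι k)
    (e : ℕ) : homogeneousComponent (δ * e) (aeval h F) = aeval h (homogeneousComponent e F) := by
  conv_lhs => rw [← sum_homogeneousComponent F, map_sum, map_sum]
  have hcomp := fun i => homogeneousComponent_of_mem (m := δ * e)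
    ((homogeneousComponent_isHomogeneous i F).aeval h hh)
  simp only [hcomp, Nat.mul_left_cancel_iff (Nat.pos_of_ne_zero hδ), Finset.sum_ite_eq,
    Finset.mem_range]
  split_ifs with he
  · rfl
  · rw [homogeneousComponent_eq_zero _ _ (by omega), map_zero]

theorem aeval_mul_of_isHomogeneous {S : Type*} [CommSemiring S] [Algebra k S]
    {F : MvPolynomial ι k} {D : ℕ} (hF : F.IsHomogeneous D) (M : S) (h : ι → S) :
    aeval (fun j => M * h j) F = M ^ D * aeval h F := by
  conv_lhs => rw [← support_sum_monomial_coeff F]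
  conv_rhs => rw [← support_sum_monomial_coeff F]
  rw [map_sum, map_sum, Finset.mul_sum]
  refine Finset.sum_congr rfl fun a ha => ?_
  have hdeg : a.degree = D := by
    rw [Finsupp.degree_eq_weight_one]; exact hF (mem_support_iff.mp ha)
  simp_rw [aeval_monomial, mul_pow, Finsupp.prod_mul]
  rw [← hdeg, Finsupp.degree_apply, Finsupp.prod, Finset.prod_pow_eq_pow_sum]
  ring

end CommSemiring

section CommRing
variable [CommRing k]

theorem ker_aeval_le_ker_aeval_of_map_eq_mul {R : Type*} [CommRing R] [IsDomain R] [Algebra k R]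
    {δ : ℕ} (hδ : δ ≠ 0) {h : ι → MvPolynomial σ k} (hh : ∀ j, (h j).IsHomogeneous δ)
    (φ : MvPolynomial σ k →ₐ[k] R) {M : R} (hM : M ≠ 0) {h' : ι → R}
    (hφ : ∀ j, φ (h j) = M * h' j) :
    RingHom.ker (aeval h : MvPolynomial ι k →ₐ[k] MvPolynomial σ k) ≤
      RingHom.ker (aeval h' : MvPolynomial ι k →ₐ[k] R) := by
  intro F hF
  rw [RingHom.mem_ker] at hF ⊢
  rw [← sum_homogeneousComponent F, map_sum]
  refine Finset.sum_eq_zero fun e _ => ?_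
  have hFe : aeval h (homogeneousComponent e F) = 0 := by
    rw [← homogeneousComponent_aeval_of_isHomogeneous hδ hh, hF, map_zero]
  have hMFe : M ^ e * aeval h' (homogeneousComponent e F) = 0 := by
    rw [← aeval_mul_of_isHomogeneous (homogeneousComponent_isHomogeneous e F), ← _root_.funext hφ,
      ← comp_aeval_apply, hFe, map_zero]
  exact (mul_eq_zero.mp hMFe).resolve_left (pow_ne_zero e hM)

noncomputable def adjoinRangeEquivOfKerAevalEq {R R' : Type*} [CommRing R] [Algebra k R]
    [CommRing R'] [Algebra k R'] {h : ι → R} {h' : ι → R'}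
    (hker : RingHom.ker (aeval h : MvPolynomial ι k →ₐ[k] R) = RingHom.ker (aeval h')) :
    Algebra.adjoin k (Set.range h) ≃ₐ[k] Algebra.adjoin k (Set.range h') :=
  (Subalgebra.equivOfEq _ _ (Algebra.adjoin_range_eq_range_aeval k h)).trans <|
    (Ideal.quotientKerEquivRange (aeval h : MvPolynomial ι k →ₐ[k] R)).symm.trans <|
    (Ideal.quotientEquivAlgOfEq k hker).trans <|
    (Ideal.quotientKerEquivRange (aeval h' : MvPolynomial ι k →ₐ[k] R')).trans <|
    Subalgebra.equivOfEq _ _ (Algebra.adjoin_range_eq_range_aeval k h').symm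

end CommRing

end MvPolynomial

theorem lt_sum_of_forall_add_le_sum {ι : Type*} [Fintype ι] [Nonempty ι] {d : ℕ} {β : ι → ℕ}
    (hd : d ≠ 0) (h : ∀ i, d + β i ≤ ∑ j, β j) : d < ∑ j, β j := by
  by_contra! hle
  have hβ : ∀ i, β i = 0 := fun i => by have := h i; omega
  obtain ⟨i⟩ := ‹Nonempty ι›
  have := h i
  simp only [hβ, Finset.sum_const_zero] at this
  omega

theorem Finsupp.degree_equivFunOnFinite_symm_sub {N : ℕ} {β : Fin N → ℕ} {a : Fin N →₀ ℕ}
    (h : ∀ i, a i ≤ β i) :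
    (Finsupp.equivFunOnFinite.symm fun i => β i - a i).degree = ∑ i, β i - a.degree := by
  simp only [Finsupp.degree_eq_sum, Finsupp.coe_equivFunOnFinite_symm]
  exact Finset.sum_tsub_distrib _ fun i _ => h i

section Magnus

variable {k : Type*} [CommSemiring k] {N : ℕ}

theorem aeval_magnus_monomial (a : Fin N →₀ ℕ) (c : k) :
    aeval (magnus k N) (monomial a c) =
      monomial (Finsupp.equivFunOnFinite.symm fun i => a.degree - a i) c := by
  rw [aeval_monomial, Finsupp.prod_fintype _ _ fun i => pow_zero _]
  simp_rw [magnus, ← Finset.prod_pow]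
  rw [Finset.prod_comm' (t' := univ) (s' := fun j => univ.erase j)
    (fun i j => by simp [and_comm, ne_comm])]
  simp_rw [Finset.prod_pow_eq_pow_sum]
  rw [monomial_eq, Finsupp.prod_fintype _ _ fun i => pow_zero _, algebraMap_eq]
  congr 2
  funext i
  congr 2
  have := Finset.sum_erase_add univ a (mem_univ i)
  simp only [Finsupp.coe_equivFunOnFinite_symm, Finsupp.degree_eq_sum]
  omega

variable {β : Fin N → ℕ} {g : MvPolynomial (Fin N) k} {d : ℕ}

theorem isHomogeneous_newtonDualWith (hg : g.IsHomogeneous d)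
    (hβg : ∀ a ∈ g.support, ∀ i, a i ≤ β i) :
    (newtonDualWith β g).IsHomogeneous (∑ i, β i - d) :=
  IsHomogeneous.sum _ _ _ fun a ha => isHomogeneous_monomial _ <| by
    rw [Finsupp.degree_equivFunOnFinite_symm_sub (hβg a ha), hg.degree_eq_sum_deg_support ha]
    rfl

theorem aeval_magnus_eq_monomial_mul_newtonDualWith (hg : g.IsHomogeneous d)
    (hβg : ∀ a ∈ g.support, ∀ i, a i ≤ β i) (hβd : ∀ i, β i ≤ d) :
    aeval (magnus k N) g =
      monomial (Finsupp.equivFunOnFinite.symm fun i => d - β i) 1 * newtonDualWith β g := by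
  conv_lhs => rw [← support_sum_monomial_coeff g]
  rw [map_sum, newtonDualWith, Finset.mul_sum]
  refine Finset.sum_congr rfl fun a ha => ?_
  have had : a.degree = d := (hg.degree_eq_sum_deg_support ha).symm
  rw [aeval_magnus_monomial, monomial_mul, one_mul, had]
  congr 2
  ext i
  have := hβg a ha i
  have := hβd i
  simp only [Finsupp.coe_equivFunOnFinite_symm, Finsupp.add_apply]
  omega

theorem aeval_magnus_newtonDualWith (hg : g.IsHomogeneous d)
    (hβg : ∀ a ∈ g.support, ∀ i, a i ≤ β i) (hβsum : ∀ i, d + β i ≤ ∑ j, β j) :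
    aeval (magnus k N) (newtonDualWith β g) =
      monomial (Finsupp.equivFunOnFinite.symm fun i => ∑ j, β j - (d + β i)) 1 * g := by
  conv_rhs => rw [← support_sum_monomial_coeff g]
  rw [newtonDualWith, map_sum, Finset.mul_sum]
  refine Finset.sum_congr rfl fun a ha => ?_
  have had : a.degree = d := (hg.degree_eq_sum_deg_support ha).symm
  rw [aeval_magnus_monomial, monomial_mul, one_mul,
    Finsupp.degree_equivFunOnFinite_symm_sub (hβg a ha), had]
  congr 2
  ext i
  have := hβg a ha i
  have := hβsum i
  simp only [Finsupp.coe_equivFunOnFinite_symm, Finsupp.add_apply]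
  omega

theorem add_le_sum_of_not_X_dvd (hg : g.IsHomogeneous d)
    (hβg : ∀ a ∈ g.support, ∀ i, a i ≤ β i) {i : Fin N} (hX : ¬ X i ∣ g) :
    d + β i ≤ ∑ j, β j := by
  obtain ⟨a, ha, hai⟩ : ∃ a ∈ g.support, a i = 0 := by
    by_contra! h
    exact hX (support_sum_monomial_coeff g ▸
      Finset.dvd_sum fun a ha => X_dvd_monomial.mpr (Or.inr (h a ha)))
  have had : ∑ j, a j = d := by
    rw [← Finsupp.degree_eq_sum]; exact (hg.degree_eq_sum_deg_support ha).symm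
  have hle : ∑ j ∈ univ.erase i, a j ≤ ∑ j ∈ univ.erase i, β j :=
    Finset.sum_le_sum fun j _ => hβg a ha j
  have := Finset.sum_erase_add univ a (mem_univ i)
  have := Finset.sum_erase_add univ β (mem_univ i)
  omega

end Magnus

theorem newtonDual_preserves_relations_and_algebra_iso_general {k : Type*} [Field k]
    {n m d : ℕ} (hd : 1 ≤ d)
    (g : Fin (m + 1) → MvPolynomial (Fin (n + 1)) k)
    (hhom : ∀ j, (g j).IsHomogeneous d)
    -- canonical restrictions: trivial gcd and every variable occurs
    (hgcd : ∀ p : MvPolynomial (Fin (n + 1)) k, (∀ j, p ∣ g j) → IsUnit p)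
    (β : Fin (n + 1) → ℕ)
    (hβ : ∀ i, β i = Finset.univ.sup fun j => (g j).degreeOf i)
    (F : MvPolynomial (Fin (m + 1)) k)
    (hvanish : aeval g F = 0) :
    aeval (fun j => newtonDualWith β (g j)) F = 0 ∧
      Nonempty (Algebra.adjoin k (Set.range g) ≃ₐ[k]
        Algebra.adjoin k (Set.range fun j => newtonDualWith β (g j))) := by
  have hβg : ∀ j, ∀ a ∈ (g j).support, ∀ i, a i ≤ β i := fun j a ha i =>
    (monomial_le_degreeOf i ha).trans <|
      hβ i ▸ Finset.le_sup (f := fun j => (g j).degreeOf i) (mem_univ j)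
  have hβd : ∀ i, β i ≤ d := fun i => hβ i ▸ Finset.sup_le fun j _ =>
    (degreeOf_le_totalDegree _ i).trans (hhom j).totalDegree_le
  have hβsum : ∀ i, d + β i ≤ ∑ l, β l := fun i => by
    obtain ⟨j, hj⟩ : ∃ j, ¬ X i ∣ g j := by
      by_contra! h
      exact X_prime.not_isUnit (hgcd _ h)
    exact add_le_sum_of_not_X_dvd (hhom j) (hβg j) hj
  have hker : RingHom.ker (aeval g) = RingHom.ker (aeval fun j => newtonDualWith β (g j)) :=
    le_antisymm
      (ker_aeval_le_ker_aeval_of_map_eq_mul (by omega) hhom (aeval (magnus k (n + 1)))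
        (monomial_eq_zero.not.mpr one_ne_zero)
        fun j => aeval_magnus_eq_monomial_mul_newtonDualWith (hhom j) (hβg j) hβd)
      (ker_aeval_le_ker_aeval_of_map_eq_mul
        (Nat.sub_ne_zero_of_lt (lt_sum_of_forall_add_le_sum (by omega) hβsum))
        (fun j => isHomogeneous_newtonDualWith (hhom j) (hβg j)) (aeval (magnus k (n + 1)))
        (monomial_eq_zero.not.mpr one_ne_zero)
        fun j => aeval_magnus_newtonDualWith (hhom j) (hβg j) hβsum)
  exact ⟨hker.le hvanish, ⟨adjoinRangeEquivOfKerAevalEq hker⟩⟩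

theorem newtonDual_preserves_relations_and_algebra_iso {k : Type*} [Field k]
    {n m d D : ℕ} (hn : 1 ≤ n) (hd : 1 ≤ d)
    (g : Fin (m + 1) → MvPolynomial (Fin (n + 1)) k)
    (hne : ∀ j, g j ≠ 0) (hhom : ∀ j, (g j).IsHomogeneous d)
    -- canonical restrictions: trivial gcd and every variable occurs
    (hgcd : ∀ p : MvPolynomial (Fin (n + 1)) k, (∀ j, p ∣ g j) → IsUnit p)
    (hvar : ∀ i, ∃ j, (g j).degreeOf i ≠ 0)
    (β : Fin (n + 1) → ℕ)
    (hβ : ∀ i, β i = Finset.univ.sup fun j => (g j).degreeOf i)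
    (F : MvPolynomial (Fin (m + 1)) k) (hF : F.IsHomogeneous D)
    (hvanish : aeval g F = 0) :
    aeval (fun j => newtonDualWith β (g j)) F = 0 ∧
      Nonempty (Algebra.adjoin k (Set.range g) ≃ₐ[k]
        Algebra.adjoin k (Set.range fun j => newtonDualWith β (g j))) :=
  newtonDual_preserves_relations_and_algebra_iso_general hd g hhom hgcd β hβ F hvanish
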